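/- arXiv:2008.12637 — 2 statements merged into one kernel-verified Lean document; each statement's English description precedes it below -/
import Mathlib

section
/- For the SAV reformulated system φ_t = -W, W = G²φ + (R/√(F₁(φ))) N'(φ), R_t = ⟨N'(φ)/(2√(F₁(φ))), φ_t⟩, the modified energy E(t) = (1/2)‖Gφ‖² + R² − C₁ satisfies dE/dt = -‖W‖² ≤ 0. -/
/-!
Self-adjointness of `G` turns `d/dt ½‖Gφ‖²` into `⟨G²φ, φ_t⟩`, and the equation for `R` is chosen
so that `d/dt R² = ⟨(R/√F₁(φ)) N'(φ), φ_t⟩`. Hence `dE/dt = ⟨W, φ_t⟩ = -‖W‖²`.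
-/

open scoped RealInnerProductSpace

section SAV

variable {H : Type*} [NormedAddCommGroup H] [InnerProductSpace ℝ H]

theorem hasDerivAt_half_norm_sq_apply {G : H →L[ℝ] H} (hG : ∀ x y : H, ⟪G x, y⟫ = ⟪x, G y⟫)
    {φ : ℝ → H} {φ' : H} {t : ℝ} (hφ : HasDerivAt φ φ' t) :
    HasDerivAt (fun s => (1 / 2) * ‖G (φ s)‖ ^ 2) ⟪G (G (φ t)), φ'⟫ t := by
  have hGφ : HasDerivAt (fun s => G (φ s)) (G φ') t := G.hasFDerivAt.comp_hasDerivAt t hφ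
  refine (hGφ.norm_sq.const_mul (1 / 2 : ℝ)).congr_deriv ?_
  rw [hG (G (φ t))]
  ring

theorem hasDerivAt_sq_of_hasDerivAt_inner {R : ℝ → ℝ} {a : ℝ} {n v : H} {t : ℝ}
    (hR : HasDerivAt R ⟪(2 * a)⁻¹ • n, v⟫ t) :
    HasDerivAt (fun s => R s ^ 2) ⟪(R t / a) • n, v⟫ t := by
  refine (hR.pow 2).congr_deriv ?_
  simp only [real_inner_smul_left]
  ring

theorem hasDerivAt_sav_energy {G : H →L[ℝ] H} (hG : ∀ x y : H, ⟪G x, y⟫ = ⟪x, G y⟫)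
    {φ : ℝ → H} {φ' n : H} {R : ℝ → ℝ} {a C : ℝ} {t : ℝ}
    (hφ : HasDerivAt φ φ' t) (hR : HasDerivAt R ⟪(2 * a)⁻¹ • n, φ'⟫ t) :
    HasDerivAt (fun s => (1 / 2) * ‖G (φ s)‖ ^ 2 + R s ^ 2 - C)
      ⟪G (G (φ t)) + (R t / a) • n, φ'⟫ t := by
  rw [inner_add_left]
  exact ((hasDerivAt_half_norm_sq_apply hG hφ).add
    (hasDerivAt_sq_of_hasDerivAt_inner hR)).sub_const C

end SAV

theorem SAV_energy_dissipation_general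
    {H : Type*} [NormedAddCommGroup H] [InnerProductSpace ℝ H]
    (G : H →L[ℝ] H) (hG : ∀ x y : H, (inner ℝ (G x) y : ℝ) = inner ℝ x (G y))
    (N' : H → H) (F₁ : H → ℝ) (C₁ : ℝ)
    (φ φt W : ℝ → H) (R : ℝ → ℝ)
    (hφ : ∀ t, HasDerivAt φ (φt t) t)
    (hW : ∀ t, W t = G (G (φ t)) + (R t / Real.sqrt (F₁ (φ t))) • N' (φ t))
    (hflow : ∀ t, φt t = -W t)
    (hR : ∀ t, HasDerivAt R
      ((inner ℝ ((2 * Real.sqrt (F₁ (φ t)))⁻¹ • N' (φ t)) (φt t) : ℝ)) t)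
    (t : ℝ) :
    HasDerivAt (fun s => (1 / 2) * ‖G (φ s)‖ ^ 2 + (R s) ^ 2 - C₁) (-‖W t‖ ^ 2) t
      ∧ -‖W t‖ ^ 2 ≤ 0 := by
  have hE := hasDerivAt_sav_energy (C := C₁) hG (hφ t) (hR t)
  rw [← hW t, hflow t, inner_neg_right, real_inner_self_eq_norm_sq] at hE
  exact ⟨hE, neg_nonpos.mpr (sq_nonneg _)⟩

/-- For the SAV-reformulated system
`φ_t = -W`, `W = G²φ + (R/√F₁(φ)) N'(φ)`, `R_t = ⟨N'(φ)/(2√F₁(φ)), φ_t⟩`,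
the modified energy `E(t) = ½‖Gφ‖² + R² − C₁` satisfies `dE/dt = -‖W‖² ≤ 0`. -/
theorem SAV_energy_dissipation
    {H : Type*} [NormedAddCommGroup H] [InnerProductSpace ℝ H]
    (G : H →L[ℝ] H) (hG : ∀ x y : H, (inner ℝ (G x) y : ℝ) = inner ℝ x (G y))
    (N' : H → H) (F₁ : H → ℝ) (hF₁ : ∀ x, 0 < F₁ x) (C₁ : ℝ)
    (φ φt W : ℝ → H) (R : ℝ → ℝ)
    (hφ : ∀ t, HasDerivAt φ (φt t) t)
    (hW : ∀ t, W t = G (G (φ t)) + (R t / Real.sqrt (F₁ (φ t))) • N' (φ t))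
    (hflow : ∀ t, φt t = -W t)
    (hR : ∀ t, HasDerivAt R
      ((inner ℝ ((2 * Real.sqrt (F₁ (φ t)))⁻¹ • N' (φ t)) (φt t) : ℝ)) t)
    (t : ℝ) :
    HasDerivAt (fun s => (1 / 2) * ‖G (φ s)‖ ^ 2 + (R s) ^ 2 - C₁) (-‖W t‖ ^ 2) t
      ∧ -‖W t‖ ^ 2 ≤ 0 :=
  SAV_energy_dissipation_general G hG N' F₁ C₁ φ φt W R hφ hW hflow hR t
end

section
/- The semi-discrete SAV/Crank-Nicolson scheme satisfies the discrete energy identity (1/2)(‖Gφ^{n+1}‖² − ‖Gφⁿ‖²) + (R^{n+1})² − (Rⁿ)² = −‖W^{n+1/2}‖² ≤ 0; in particular the modified discrete energy F^n = (1/2)‖Gφⁿ‖² + (Rⁿ)² − C₁ is nonincreasing. -/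
/-!
Pair the scheme with `φⁿ⁺¹ − φⁿ`. Since `G` is self-adjoint, the `G²φⁿ⁺¹ᐟ²` term contributes
`½(‖Gφⁿ⁺¹‖² − ‖Gφⁿ‖²)`, and the update rule for `R` turns the `Rⁿ⁺¹ᐟ² u` term into
`(Rⁿ⁺¹)² − (Rⁿ)²`, whatever `u` is. The left-hand side is `⟪W, −τW⟫ = −τ‖W‖² ≤ 0`.
-/

open scoped RealInnerProductSpace

section

variable {E : Type*} [NormedAddCommGroup E] [InnerProductSpace ℝ E]

theorem real_inner_add_sub_eq_norm_sq_sub_norm_sq (x y : E) :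
    ⟪x + y, x - y⟫ = ‖x‖ ^ 2 - ‖y‖ ^ 2 := by
  rw [inner_add_left, inner_sub_right, inner_sub_right, real_inner_comm x y,
    real_inner_self_eq_norm_sq, real_inner_self_eq_norm_sq]
  ring

theorem LinearMap.IsSymmetric.inner_apply_apply_midpoint_sub {T : E →ₗ[ℝ] E}
    (hT : T.IsSymmetric) (x y : E) :
    ⟪T (T ((2 : ℝ)⁻¹ • (x + y))), x - y⟫ = (1 / 2) * (‖T x‖ ^ 2 - ‖T y‖ ^ 2) := by
  rw [hT, map_smul, map_add, map_sub, real_inner_smul_left,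
    real_inner_add_sub_eq_norm_sq_sub_norm_sq]
  ring

theorem inner_increment_eq_sav_energy_increment {T : E →ₗ[ℝ] E} (hT : T.IsSymmetric)
    {u W φ φ' : E} {R R' : ℝ}
    (hW : W = T (T ((2 : ℝ)⁻¹ • (φ' + φ))) + ((R' + R) / 2) • u)
    (hR : R' - R = (1 / 2) * ⟪u, φ' - φ⟫) :
    ⟪W, φ' - φ⟫ = (1 / 2) * (‖T φ'‖ ^ 2 - ‖T φ‖ ^ 2) + R' ^ 2 - R ^ 2 := by
  rw [hW, inner_add_left, hT.inner_apply_apply_midpoint_sub, real_inner_smul_left]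
  linear_combination (-(R' + R)) * hR

end

/-- The semi-discrete SAV/Crank–Nicolson scheme satisfies the discrete
energy identity
`½(‖Gφ^{n+1}‖² − ‖Gφⁿ‖²) + (R^{n+1})² − (Rⁿ)² = −τ‖W^{n+1/2}‖² ≤ 0`;
in particular the modified discrete energy `Fⁿ = ½‖Gφⁿ‖² + (Rⁿ)² − C₁` is nonincreasing. -/
theorem SAV_CN_discrete_energy
    {H : Type*} [NormedAddCommGroup H] [InnerProductSpace ℝ H]
    (G : H →L[ℝ] H) (hG : ∀ x y : H, (inner ℝ (G x) y : ℝ) = inner ℝ x (G y))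
    (τ : ℝ) (hτ : 0 < τ) (C₁ : ℝ)
    (u W φn φn1 : H) (Rn Rn1 : ℝ)
    (h1 : φn1 - φn = (-τ) • W)
    (h2 : W = G (G ((2 : ℝ)⁻¹ • (φn1 + φn))) + ((Rn1 + Rn) / 2) • u)
    (h3 : Rn1 - Rn = (1 / 2) * (inner ℝ u (φn1 - φn) : ℝ)) :
    ((1 / 2) * (‖G φn1‖ ^ 2 - ‖G φn‖ ^ 2) + Rn1 ^ 2 - Rn ^ 2 = -(τ * ‖W‖ ^ 2))
      ∧ (1 / 2) * ‖G φn1‖ ^ 2 + Rn1 ^ 2 - C₁ ≤ (1 / 2) * ‖G φn‖ ^ 2 + Rn ^ 2 - C₁ := by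
  have energy_increment :
      ⟪W, φn1 - φn⟫ = (1 / 2) * (‖G φn1‖ ^ 2 - ‖G φn‖ ^ 2) + Rn1 ^ 2 - Rn ^ 2 :=
    inner_increment_eq_sav_energy_increment (T := (G : H →ₗ[ℝ] H)) hG h2 h3
  rw [h1, real_inner_smul_right, real_inner_self_eq_norm_sq] at energy_increment
  have dissipation : 0 ≤ τ * ‖W‖ ^ 2 := by positivity
  exact ⟨by linarith, by linarith⟩
end
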